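/- arXiv:2102.13572 — 3 statements merged into one kernel-verified Lean document; each statement's English description precedes it below -/
import Mathlib

section
/- With φ : A ⋊ B → H × C as above, the intersection of the full diagonal Δ_C = {(c,c) : c ∈ C} ≤ H × C (using C ≤ H) with φ(A ⋊ B) equals the diagonal Δ_{θ(B)} = {(θ(b), θ(b)) : b ∈ B}. -/
namespace MonoidHom

variable {G K C H : Type*} [Group G] [Group K] [Group C] [Group H]

theorem range_prod_id_inf_range_prod_comp {i : G →* H}
    {r : G →* K} {s : K →* G} (hrs : r.comp s = MonoidHom.id K) {j : C →* H} {θ : K →* C}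
    (hsθ : i.comp s = j.comp θ) :
    (j.prod (MonoidHom.id C)).range ⊓ (i.prod (θ.comp r)).range = ((j.comp θ).prod θ).range := by
  apply le_antisymm
  · rintro _ ⟨⟨c, rfl⟩, g, hg⟩
    obtain rfl : θ (r g) = c := congrArg Prod.snd hg
    exact ⟨r g, rfl⟩
  · rintro _ ⟨k, rfl⟩
    exact ⟨⟨θ k, rfl⟩, s k,
      Prod.ext (DFunLike.congr_fun hsθ k) (congrArg θ (DFunLike.congr_fun hrs k))⟩

end MonoidHom

theorem diagonal_inter_image_eq_diagonal_thetaB_general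
    {A B C H : Type*} [Group A] [Group B] [Group C] [Group H]
    (φ : B →* MulAut A) (θ : B →* C)
    (i : A ⋊[φ] B →* H) (j : C →* H)
    (hamalg : i.comp SemidirectProduct.inr = j.comp θ)
    (ψ : (A ⋊[φ] B) →* H × C)
    (hψ : ψ = MonoidHom.prod i (θ.comp SemidirectProduct.rightHom)) :
    (MonoidHom.prod j (MonoidHom.id C)).range ⊓ ψ.range =
      (MonoidHom.prod (j.comp θ) θ).range := by
  subst hψ
  exact MonoidHom.range_prod_id_inf_range_prod_comp SemidirectProduct.rightHom_comp_inr hamalg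

/-- With `ψ : A ⋊ B → H × C`, `a·b ↦ (a·b, θ(b))`, as above,
the intersection of the full diagonal `Δ_C = {(c, c) : c ∈ C} ≤ H × C`
(using the embedding `j : C → H`) with `ψ(A ⋊ B)` equals the diagonal
`Δ_{θ(B)} = {(θ(b), θ(b)) : b ∈ B}`. -/
theorem diagonal_inter_image_eq_diagonal_thetaB
    {A B C H : Type*} [Group A] [Group B] [Group C] [Group H]
    (φ : B →* MulAut A) (θ : B →* C) (hθ : Function.Injective θ)
    (i : A ⋊[φ] B →* H) (j : C →* H)
    (hi : Function.Injective i) (hj : Function.Injective j)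
    (hamalg : i.comp SemidirectProduct.inr = j.comp θ)
    (ψ : (A ⋊[φ] B) →* H × C)
    (hψ : ψ = MonoidHom.prod i (θ.comp SemidirectProduct.rightHom)) :
    (MonoidHom.prod j (MonoidHom.id C)).range ⊓ ψ.range =
      (MonoidHom.prod (j.comp θ) θ).range :=
  diagonal_inter_image_eq_diagonal_thetaB_general φ θ i j hamalg ψ hψ
end

section
/- Let G = BS(1,2) = ⟨a,t | t a t⁻¹ = a²⟩ and consider the subgroup K = ⟨(a,1), (t,t)⟩ of G × ⟨t⟩ ≅ G × ℤ. Then the intersection (G × 1) ∩ K is strictly larger than ⟨(a,1)⟩; in fact it equals the normal closure of (a,1) in K and is not finitely generated. -/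
/-- Relator of `BS(1,2) = ⟨a, t ∣ t a t⁻¹ = a²⟩`, with `a` the generator `0` and `t` the
generator `1` of the free group on two letters. -/
def bsRels : Set (FreeGroup (Fin 2)) :=
  {FreeGroup.of 1 * FreeGroup.of 0 * (FreeGroup.of 1)⁻¹ *
    (FreeGroup.of 0 * FreeGroup.of 0)⁻¹}

/-- The Baumslag–Solitar group `BS(1,2)`. -/
def BS12 : Type := PresentedGroup bsRels

instance : Group BS12 := by unfold BS12; infer_instance

/-- The generator `a` of `BS(1,2)`. -/
def bsA : BS12 := PresentedGroup.of 0

/-- The generator `t` of `BS(1,2)`. -/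
def bsT : BS12 := PresentedGroup.of 1

/-- The subgroup `K = ⟨(a,1), (t,t)⟩` of `G × ℤ`, `G = BS(1,2)` (the second factor `ℤ`
is written multiplicatively, generated by `t`). -/
def bsK : Subgroup (BS12 × Multiplicative ℤ) :=
  Subgroup.closure {(bsA, 1), (bsT, Multiplicative.ofAdd 1)}

/-- The subgroup `G × 1` of `G × ℤ`. -/
def bsGfac : Subgroup (BS12 × Multiplicative ℤ) :=
  (⊤ : Subgroup BS12).prod (⊥ : Subgroup (Multiplicative ℤ))


/-!
Write `x = (a,1)`, `y = (t,t)` and let `π : G × ℤ → ℤ` be the projection. Since `π x = 0` and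
`π y = 1`, every `k ∈ K` is a product of `K`-conjugates of `x` times `y ^ π k`; hence
`(G × 1) ∩ K = K ∩ ker π` is the normal closure of `x` in `K`.

`BS(1,2)` acts on `ℚ` by the affine maps `a : q ↦ q + 1`, `t : q ↦ 2q`, i.e. maps to `ℚ ⋊ ℤ`. On `K`
the `ℤ`-part of this map is `π`, so on `(G × 1) ∩ K` it takes values in the translations, and
the translation part is a homomorphism to `ℚ`. The conjugates `y⁻ᵏ x yᵏ` go to `2⁻ᵏ`, so its image
has unbounded denominators and is not finitely generated; a fortiori `(G × 1) ∩ K` is not, and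
it differs from the cyclic group `⟨x⟩`.
-/

open Multiplicative

namespace Subgroup

variable {G : Type*} [Group G]

theorem conj_mem_closure_conjugates {K : Subgroup G} {x k c : G} (hk : k ∈ K)
    (hc : c ∈ closure {g | ∃ k ∈ K, g = k * x * k⁻¹}) :
    k * c * k⁻¹ ∈ closure {g | ∃ k ∈ K, g = k * x * k⁻¹} := by
  have hmap : (closure {g | ∃ k ∈ K, g = k * x * k⁻¹}).map (MulAut.conj k).toMonoidHom ≤
      closure {g | ∃ k ∈ K, g = k * x * k⁻¹} := by
    rw [MonoidHom.map_closure]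
    refine closure_mono ?_
    rintro _ ⟨_, ⟨k', hk', rfl⟩, rfl⟩
    exact ⟨k * k', mul_mem hk hk', by simp [mul_assoc]⟩
  exact hmap ⟨c, hc, rfl⟩

theorem mul_zpow_neg_mem_closure_conjugates {x y p : G} (π : G →* Multiplicative ℤ)
    (hx : π x = 1) (hy : π y = ofAdd 1) (hp : p ∈ closure {x, y}) :
    p * y ^ (-toAdd (π p)) ∈ closure {g | ∃ k ∈ closure {x, y}, g = k * x * k⁻¹} := by
  induction hp using closure_induction with
  | mem q hq =>
    rcases hq with hq | hq <;> subst q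
    · have hxC : x ∈ closure {g | ∃ k ∈ closure {x, y}, g = k * x * k⁻¹} :=
        subset_closure ⟨1, one_mem _, by simp⟩
      simpa [hx] using hxC
    · simp [hy]
  | one => simp
  | mul p q hp hq ihp ihq =>
    have hpq : p * q * y ^ (-toAdd (π (p * q))) =
        (p * (q * y ^ (-toAdd (π q))) * p⁻¹) * (p * y ^ (-toAdd (π p))) := by
      rw [map_mul, toAdd_mul, neg_add, zpow_add]
      group
    rw [hpq]
    exact mul_mem (conj_mem_closure_conjugates hp ihq) ihp
  | inv p hp ihp =>
    have hinv :
        p⁻¹ * y ^ (-toAdd (π p⁻¹)) = p⁻¹ * (p * y ^ (-toAdd (π p)))⁻¹ * p⁻¹⁻¹ := by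
      rw [map_inv, toAdd_inv]
      group
    rw [hinv]
    exact conj_mem_closure_conjugates (inv_mem hp) (inv_mem ihp)

theorem closure_pair_inf_ker_eq_closure_conjugates {x y : G} (π : G →* Multiplicative ℤ)
    (hx : π x = 1) (hy : π y = ofAdd 1) :
    closure {x, y} ⊓ π.ker = closure {g | ∃ k ∈ closure {x, y}, g = k * x * k⁻¹} := by
  apply le_antisymm
  · rintro p ⟨hpK, hpker⟩
    simpa [(MonoidHom.mem_ker).1 hpker] using mul_zpow_neg_mem_closure_conjugates π hx hy hpK
  · rw [closure_le]
    rintro _ ⟨k, hk, rfl⟩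
    have hxK : x ∈ closure {x, y} := subset_closure (Set.mem_insert x _)
    exact mem_inf.2 ⟨mul_mem (mul_mem hk hxK) (inv_mem hk), by simp [hx]⟩

end Subgroup

theorem AddSubgroup.FG.exists_le_zmultiples_inv {H : AddSubgroup ℚ} (hH : H.FG) :
    ∃ D : ℕ, 0 < D ∧ H ≤ AddSubgroup.zmultiples ((D : ℚ)⁻¹) := by
  obtain ⟨S, rfl⟩ := hH
  refine ⟨∏ s ∈ S, s.den, Finset.prod_pos fun s _ => s.den_pos, ?_⟩
  rw [AddSubgroup.closure_le]
  intro s hs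
  obtain ⟨c, hc⟩ := Finset.dvd_prod_of_mem Rat.den hs
  refine ⟨s.num * c, ?_⟩
  have hc0 : (c : ℚ) ≠ 0 := by
    have hpos : 0 < ∏ s ∈ S, s.den := Finset.prod_pos fun s _ => s.den_pos
    rw [hc] at hpos
    exact_mod_cast (Nat.pos_of_mul_pos_left hpos).ne'
  change (s.num * c : ℤ) • ((∏ s ∈ S, s.den : ℕ) : ℚ)⁻¹ = s
  rw [hc, zsmul_eq_mul]
  push_cast
  nth_rewrite 3 [← Rat.num_div_den s]
  field_simp

theorem AddSubgroup.not_fg_of_forall_inv_pow_mem {H : AddSubgroup ℚ} {n : ℕ} (hn : 2 ≤ n)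
    (h : ∀ k : ℕ, ((n : ℚ) ^ k)⁻¹ ∈ H) : ¬ H.FG := by
  intro hH
  obtain ⟨D, hD, hle⟩ := hH.exists_le_zmultiples_inv
  obtain ⟨m, hm⟩ := AddSubgroup.mem_zmultiples_iff.1 (hle (h D))
  have hDm : (D : ℤ) = m * n ^ D := by
    rw [zsmul_eq_mul] at hm
    have hn0 : (n : ℚ) ≠ 0 := by positivity
    field_simp at hm
    exact_mod_cast hm.symm
  have hdvd : n ^ D ∣ D := by exact_mod_cast Dvd.intro_left m hDm.symm
  exact absurd (Nat.le_of_dvd hD hdvd) (not_le.2 (Nat.lt_pow_self hn))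

def BS12.lift {M : Type*} [Group M] (a t : M) (h : t * a * t⁻¹ = a * a) : BS12 →* M :=
  PresentedGroup.toGroup (f := ![a, t]) (by
    rintro r rfl
    simp [h])

section BS12Lift

variable {M : Type*} [Group M] {a t : M} (h : t * a * t⁻¹ = a * a)

@[simp] theorem BS12.lift_bsA : BS12.lift a t h bsA = a := PresentedGroup.toGroup.of _

@[simp] theorem BS12.lift_bsT : BS12.lift a t h bsT = t := PresentedGroup.toGroup.of _

end BS12Lift

def dyadicAut : Multiplicative ℤ →* MulAut (Multiplicative ℚ) :=
  ((MulAutMultiplicative (G := ℚ)).symm.toMonoidHom.comp AddAut.mulLeft).comp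
    (zpowersHom ℚˣ (Units.mk0 2 two_ne_zero))

@[simp] theorem dyadicAut_apply (n : ℤ) (q : ℚ) :
    dyadicAut (ofAdd n) (ofAdd q) = ofAdd (2 ^ n * q) := by
  change ofAdd (((Units.mk0 2 two_ne_zero ^ n : ℚˣ) : ℚ) * q) = _
  simp

/-- `(r, n)` in the target acts on `ℚ` as `q ↦ 2 ^ n * q + r`. -/
def bsAffine : BS12 →* Multiplicative ℚ ⋊[dyadicAut] Multiplicative ℤ :=
  BS12.lift (SemidirectProduct.inl (ofAdd 1)) (SemidirectProduct.inr (ofAdd 1)) (by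
    rw [← map_inv, ← SemidirectProduct.inl_aut, dyadicAut_apply, ← map_mul, ← ofAdd_add]
    norm_num)

theorem bsAffine_right_of_mem_bsK {p : BS12 × Multiplicative ℤ} (hp : p ∈ bsK) :
    (bsAffine p.1).right = p.2 :=
  MonoidHom.eqOn_closure
    (f := SemidirectProduct.rightHom.comp (bsAffine.comp (MonoidHom.fst BS12 (Multiplicative ℤ))))
    (g := MonoidHom.snd BS12 (Multiplicative ℤ)) (by rintro _ (rfl | rfl) <;> simp [bsAffine]) hp

theorem bsAffine_right_of_mem_inf {p : BS12 × Multiplicative ℤ} (hp : p ∈ bsGfac ⊓ bsK) :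
    (bsAffine p.1).right = 1 :=
  (bsAffine_right_of_mem_bsK hp.2).trans (by simpa [bsGfac, Subgroup.mem_prod] using hp.1)

/-- A homomorphism because `bsAffine` maps `(G × 1) ∩ K` into the translations `ℚ ⋊ 1`. -/
def bsTranslation : ↥(bsGfac ⊓ bsK) →* Multiplicative ℚ where
  toFun p := (bsAffine p.1.1).left
  map_one' := by simp
  map_mul' p q := by simp [SemidirectProduct.mul_left, bsAffine_right_of_mem_inf p.2]

theorem bsGfac_inf_bsK_eq_closure_conjugates :
    bsGfac ⊓ bsK =
      Subgroup.closure {x : BS12 × Multiplicative ℤ | ∃ k ∈ bsK, x = k * (bsA, 1) * k⁻¹} := by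
  rw [inf_comm, bsGfac, ← MonoidHom.ker_snd]
  exact Subgroup.closure_pair_inf_ker_eq_closure_conjugates
    (MonoidHom.snd BS12 (Multiplicative ℤ)) rfl rfl

theorem bsAffine_conj_zpow (m : ℤ) :
    bsAffine (bsT ^ m * bsA * (bsT ^ m)⁻¹) = SemidirectProduct.inl (ofAdd (2 ^ m)) := by
  rw [map_mul, map_mul, map_inv, map_zpow, bsAffine, BS12.lift_bsA, BS12.lift_bsT, ← map_zpow,
    ← map_inv, ← SemidirectProduct.inl_aut, ← ofAdd_zsmul, smul_eq_mul, mul_one, dyadicAut_apply,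
    mul_one]

theorem not_fg_bsGfac_inf_bsK : ¬ (bsGfac ⊓ bsK).FG := by
  intro hFG
  have : Group.FG ↥(bsGfac ⊓ bsK) := (Group.fg_iff_subgroup_fg _).2 hFG
  have hrange : bsTranslation.range.FG := (Group.fg_iff_subgroup_fg _).1 inferInstance
  have hadd : (Subgroup.toAddSubgroup' bsTranslation.range).FG := by
    rwa [AddSubgroup.fg_iff_mul_fg, OrderIso.apply_symm_apply]
  refine AddSubgroup.not_fg_of_forall_inv_pow_mem (n := 2) le_rfl (fun k => ?_) hadd
  set y : BS12 × Multiplicative ℤ := (bsT, ofAdd 1)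
  have hy : y ∈ bsK := Subgroup.subset_closure (Set.mem_insert_of_mem _ (Set.mem_singleton _))
  have hmem : y ^ (-k : ℤ) * (bsA, 1) * (y ^ (-k : ℤ))⁻¹ ∈ bsGfac ⊓ bsK := by
    rw [bsGfac_inf_bsK_eq_closure_conjugates]
    exact Subgroup.subset_closure ⟨_, zpow_mem hy _, rfl⟩
  refine (Subgroup.mem_toAddSubgroup' _ _).2 ⟨⟨_, hmem⟩, ?_⟩
  change (bsAffine (bsT ^ (-k : ℤ) * bsA * (bsT ^ (-k : ℤ))⁻¹)).left = _
  rw [bsAffine_conj_zpow, SemidirectProduct.left_inl, zpow_neg, zpow_natCast, Nat.cast_ofNat]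

/-- For `G = BS(1,2)` and `K = ⟨(a,1), (t,t)⟩ ≤ G × ℤ`, the intersection
`(G × 1) ∩ K` is strictly larger than `⟨(a,1)⟩`; in fact it equals the normal closure of
`(a,1)` in `K` (the subgroup generated by all `K`-conjugates of `(a,1)`) and it is not
finitely generated. -/
theorem BS12_factor_inter_K :
    Subgroup.closure ({((bsA, 1) : BS12 × Multiplicative ℤ)}) < bsGfac ⊓ bsK ∧
    bsGfac ⊓ bsK =
      Subgroup.closure
        {x : BS12 × Multiplicative ℤ | ∃ k ∈ bsK, x = k * (bsA, 1) * k⁻¹} ∧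
    ¬ (bsGfac ⊓ bsK).FG := by
  refine ⟨lt_of_le_of_ne ?_ ?_, bsGfac_inf_bsK_eq_closure_conjugates, not_fg_bsGfac_inf_bsK⟩
  · rw [Subgroup.closure_le, Set.singleton_subset_iff, bsGfac_inf_bsK_eq_closure_conjugates]
    exact Subgroup.subset_closure ⟨1, one_mem _, by simp⟩
  · intro h
    exact not_fg_bsGfac_inf_bsK (h ▸ ⟨{(bsA, 1)}, by simp⟩)
end

section
/- Let φ be the automorphism of the free group F_k given by φ(x₁)=x₁ and φ(x_i)=x₁x₂⋯x_i for 2 ≤ i ≤ k. Then for each 1 ≤ i ≤ k the word length of φⁿ(x_i) with respect to the generators {x₁,…,x_k} grows polynomially of degree exactly i−1 in n; in particular |φⁿ(x₁)| = 1 for all n, and |φⁿ(x_i)| is bounded above and below by positive constant multiples of n^{i−1}. -/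
/-!
The words `φⁿ(x_i)` are positive, since `φ` maps generators to positive words. On positive words
the word length equals the exponent sum, which is a homomorphism to `ℤ`. Applying it to the
recursion `φⁿ⁺¹(x_i) = φⁿ(x₁) ⋯ φⁿ(x_i)` and using the hockey-stick identity gives, with the
generators indexed from `0`, the exact length `|φⁿ(x_i)| = (n + i).choose i`, which lies between
`nⁱ / i!` and `2ⁱ nⁱ` once `n ≥ 1`.
-/

/-- The automorphism `φ` of the free group on `x₁, …, x_k` (indexed by `Fin k`, so the
generator indexed by `i : Fin k` is `x_{i+1}`) with `φ(x₁) = x₁` and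
`φ(x_i) = x₁ x₂ ⋯ x_i` for `i ≥ 2`. -/
def polyPhi (k : ℕ) : FreeGroup (Fin k) →* FreeGroup (Fin k) :=
  FreeGroup.lift (fun i =>
    (((List.finRange k).filter (fun j => j ≤ i)).map FreeGroup.of).prod)

open Finset Multiplicative

namespace FreeGroup

variable {α : Type*}

def expSum : FreeGroup α →* Multiplicative ℤ :=
  lift fun _ => ofAdd 1

@[simp]
lemma expSum_of (a : α) : expSum (of a) = ofAdd 1 :=
  lift_apply_of

lemma toAdd_expSum_mk_le_length (L : List (α × Bool)) : toAdd (expSum (mk L)) ≤ L.length := by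
  induction L with
  | nil => simp [← one_eq_mk]
  | cons a L ih =>
    obtain ⟨x, _ | _⟩ := a
    · change toAdd (expSum ((of x)⁻¹ * mk L)) ≤ L.length + 1
      simp only [_root_.map_mul, _root_.map_inv, expSum_of, toAdd_mul, toAdd_inv, toAdd_ofAdd]
      omega
    · change toAdd (expSum (of x * mk L)) ≤ L.length + 1
      simp only [_root_.map_mul, expSum_of, toAdd_mul, toAdd_ofAdd]
      omega

def positiveWords (α : Type*) : Submonoid (FreeGroup α) :=
  Submonoid.closure (Set.range of)

variable [DecidableEq α]

lemma toAdd_expSum_le_norm (w : FreeGroup α) : toAdd (expSum w) ≤ w.norm := by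
  have h := toAdd_expSum_mk_le_length w.toWord
  rwa [mk_toWord] at h

lemma norm_eq_toAdd_expSum {w : FreeGroup α} (hw : w ∈ positiveWords α) :
    (w.norm : ℤ) = toAdd (expSum w) := by
  induction hw using Submonoid.closure_induction with
  | mem x hx => obtain ⟨a, rfl⟩ := hx; simp [norm_of]
  | one => simp [norm_one]
  | mul x y _ _ hx hy =>
    refine le_antisymm ?_ (toAdd_expSum_le_norm _)
    calc (((x * y).norm : ℕ) : ℤ) ≤ x.norm + y.norm := mod_cast norm_mul_le x y
      _ = toAdd (expSum (x * y)) := by rw [hx, hy, _root_.map_mul, toAdd_mul]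

end FreeGroup

lemma MonoidHom.iterate_map_list_prod {M : Type*} [Monoid M] (f : M →* M) (n : ℕ) (L : List M) :
    f^[n] L.prod = (L.map f^[n]).prod :=
  map_list_prod ((show Monoid.End M from f) ^ n) L

lemma Fin.prod_Iic_eq_prod_map_filter_le {M : Type*} [CommMonoid M] {k : ℕ} (i : Fin k)
    (f : Fin k → M) :
    ∏ j ∈ Iic i, f j = (((List.finRange k).filter (fun j => j ≤ i)).map f).prod := by
  rw [← List.prod_toFinset f ((List.nodup_finRange k).filter _), List.toFinset_filter,
    List.toFinset_finRange]
  congr 1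
  ext j
  simp

lemma Fin.sum_Iic_add_choose {k : ℕ} (n : ℕ) (i : Fin k) :
    ∑ j ∈ Iic i, (n + j).choose j = (n + 1 + i).choose i :=
  calc ∑ j ∈ Iic i, (n + j).choose j
      = ∑ m ∈ (Iic i).map Fin.valEmbedding, (n + m).choose m :=
        (sum_map (Iic i) Fin.valEmbedding fun m => (n + m).choose m).symm
    _ = ∑ m ∈ range (i + 1), (m + n).choose n := by
      rw [Fin.map_valEmbedding_Iic, Nat.range_succ_eq_Iic]
      simp only [add_comm n, Nat.choose_symm_add]
    _ = (n + 1 + i).choose i := by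
      rw [Nat.sum_range_add_choose, ← Nat.choose_symm_add]
      ring_nf

lemma pow_div_factorial_le_choose_add {α : Type*} [Semifield α] [LinearOrder α]
    [IsStrictOrderedRing α] (n j : ℕ) : (n : α) ^ j / j.factorial ≤ (n + j).choose j :=
  calc (n : α) ^ j / j.factorial ≤ ((n + j + 1 - j : ℕ) : α) ^ j / j.factorial := by
        gcongr; exact_mod_cast (by omega : n ≤ n + j + 1 - j)
    _ ≤ (n + j).choose j := Nat.pow_le_choose j (n + j)

lemma Nat.choose_add_le_two_pow_mul_pow {n : ℕ} (hn : 1 ≤ n) (j : ℕ) :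
    (n + j).choose j ≤ 2 ^ j * n ^ j :=
  (Nat.choose_add_le_add_one_pow n j).trans (by rw [← mul_pow]; gcongr; omega)

section polyPhi

open FreeGroup

variable {k : ℕ}

lemma polyPhi_of (i : Fin k) :
    polyPhi k (of i) = (((List.finRange k).filter (fun j => j ≤ i)).map of).prod :=
  lift_apply_of

lemma iterate_succ_polyPhi_of (n : ℕ) (i : Fin k) :
    (⇑(polyPhi k))^[n + 1] (of i) =
      (((List.finRange k).filter (fun j => j ≤ i)).map
        fun j => (⇑(polyPhi k))^[n] (of j)).prod := by
  rw [Function.iterate_succ_apply, polyPhi_of, MonoidHom.iterate_map_list_prod, List.map_map]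
  rfl

lemma polyPhi_mem_positiveWords {w : FreeGroup (Fin k)} (hw : w ∈ positiveWords (Fin k)) :
    polyPhi k w ∈ positiveWords (Fin k) := by
  have : positiveWords (Fin k) ≤ (positiveWords (Fin k)).comap (polyPhi k) := by
    refine Submonoid.closure_le.2 ?_
    rintro _ ⟨i, rfl⟩
    rw [SetLike.mem_coe, Submonoid.mem_comap, polyPhi_of]
    refine Submonoid.list_prod_mem _ ?_
    simp only [List.mem_map]
    rintro _ ⟨j, -, rfl⟩
    exact Submonoid.subset_closure ⟨j, rfl⟩
  exact this hw

lemma iterate_polyPhi_of_mem_positiveWords (n : ℕ) (i : Fin k) :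
    (⇑(polyPhi k))^[n] (of i) ∈ positiveWords (Fin k) := by
  induction n with
  | zero => exact Submonoid.subset_closure ⟨i, rfl⟩
  | succ n ih =>
    rw [Function.iterate_succ_apply']
    exact polyPhi_mem_positiveWords ih

lemma expSum_iterate_polyPhi_of (n : ℕ) (i : Fin k) :
    expSum ((⇑(polyPhi k))^[n] (of i)) = ofAdd ((n + i).choose i : ℤ) := by
  induction n generalizing i with
  | zero => simp
  | succ n ih =>
    rw [iterate_succ_polyPhi_of, map_list_prod, List.map_map,
      ← Fin.prod_Iic_eq_prod_map_filter_le]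
    simp only [Function.comp_apply, ih]
    rw [← ofAdd_sum, ← Nat.cast_sum, Fin.sum_Iic_add_choose]

lemma norm_iterate_polyPhi_of (n : ℕ) (i : Fin k) :
    ((⇑(polyPhi k))^[n] (of i)).norm = (n + i).choose i := by
  have h := norm_eq_toAdd_expSum (iterate_polyPhi_of_mem_positiveWords n i)
  rw [expSum_iterate_polyPhi_of, toAdd_ofAdd] at h
  exact_mod_cast h

end polyPhi

/-- For the automorphism `φ` of `F_k` with `φ(x₁)=x₁`, `φ(x_i)=x₁⋯x_i`, the
word length of `φⁿ(x_i)` grows polynomially of degree exactly `i−1` in `n`: one has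
`|φⁿ(x₁)| = 1` for all `n`, and for each generator (indexed by `i : Fin k`, the generator
`x_{i+1}` of degree `(i : ℕ)`) there are positive constants `c₁, c₂` with
`c₁·n^{i} ≤ |φⁿ(x_{i+1})| ≤ c₂·n^{i}` for all `n ≥ 1`. -/
theorem polyPhi_growth (k : ℕ) (hk : 0 < k) :
    (∀ n : ℕ, FreeGroup.norm ((⇑(polyPhi k))^[n] (FreeGroup.of (⟨0, hk⟩ : Fin k))) = 1) ∧
    (∀ i : Fin k, ∃ c₁ c₂ : ℝ, 0 < c₁ ∧ 0 < c₂ ∧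
      ∀ n : ℕ, 1 ≤ n →
        c₁ * (n : ℝ) ^ (i : ℕ) ≤
            (FreeGroup.norm ((⇑(polyPhi k))^[n] (FreeGroup.of i)) : ℝ) ∧
          (FreeGroup.norm ((⇑(polyPhi k))^[n] (FreeGroup.of i)) : ℝ) ≤
            c₂ * (n : ℝ) ^ (i : ℕ)) := by
  refine ⟨fun n => by simp [norm_iterate_polyPhi_of], fun i => ?_⟩
  refine ⟨1 / (i : ℕ).factorial, 2 ^ (i : ℕ), by positivity, by positivity, fun n hn => ⟨?_, ?_⟩⟩
  · rw [norm_iterate_polyPhi_of, one_div_mul_eq_div]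
    exact pow_div_factorial_le_choose_add n i
  · rw [norm_iterate_polyPhi_of]
    exact_mod_cast Nat.choose_add_le_two_pow_mul_pow hn i
end
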